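/- Let f : ℝᵈ → ℝ be C², μ-strongly-convex and L-smooth, with gradient flow trajectory y(t) having gradients bounded by ℓ. For any 0 < h ≤ 1/L, the sampled flow yₖ = y(kh) is ε-shadowed by the gradient descent orbit started at x₀ = y₀, with shadowing radius ε = hℓL/(2μ). -/

import Mathlib

/-!
The descent map `z ↦ z - h ∇f z` has derivative `I - h ∇²f`, a symmetric operator whose
quadratic form lies between `(1 - hL)‖v‖²` and `(1 - hμ)‖v‖²`; since `hL ≤ 1` it is a
`(1 - hμ)`-contraction. One step of the flow differs from one descent step from the same point
by at most `Lℓh²/2`, because the flow moves at speed at most `ℓ` and `∇f` is `L`-Lipschitz.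
So the errors `eₖ = ‖xₖ - y(kh)‖` satisfy `eₖ₊₁ ≤ (1 - hμ) eₖ + hμ ε` with `ε = hℓL/(2μ)`,
and `e₀ = 0` keeps them below `ε`.
-/

open InnerProductSpace Set
open scoped RealInnerProductSpace

section SymmetricOperator

variable {E : Type*} [NormedAddCommGroup E] [InnerProductSpace ℝ E]

theorem ContinuousLinearMap.inner_self_apply_le_of_opNorm_le {A : E →L[ℝ] E} {L : ℝ}
    (hL : ‖A‖ ≤ L) (v : E) : ⟪v, A v⟫_ℝ ≤ L * ‖v‖ ^ 2 :=
  calc ⟪v, A v⟫_ℝ ≤ ‖v‖ * ‖A v‖ := real_inner_le_norm _ _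
    _ ≤ ‖v‖ * (L * ‖v‖) := by gcongr; exact A.le_of_opNorm_le hL v
    _ = L * ‖v‖ ^ 2 := by ring

theorem ContinuousLinearMap.le_of_coercive_of_opNorm_le [Nontrivial E] {A : E →L[ℝ] E}
    {μ L : ℝ} (hμ : ∀ v, μ * ‖v‖ ^ 2 ≤ ⟪v, A v⟫_ℝ) (hL : ‖A‖ ≤ L) : μ ≤ L := by
  obtain ⟨v, hv⟩ := exists_ne (0 : E)
  have hv2 : 0 < ‖v‖ ^ 2 := by positivity
  exact le_of_mul_le_mul_right ((hμ v).trans (A.inner_self_apply_le_of_opNorm_le hL v)) hv2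

theorem ContinuousLinearMap.opNorm_le_of_isSymmetric {T : E →L[ℝ] E}
    (hT : (T : E →ₗ[ℝ] E).IsSymmetric) {c : ℝ} (hc : 0 ≤ c)
    (h : ∀ v, |⟪T v, v⟫_ℝ| ≤ c * ‖v‖ ^ 2) : ‖T‖ ≤ c := by
  rw [T.norm_eq_iSup_rayleighQuotient hT]
  refine ciSup_le fun v => ?_
  rcases eq_or_ne v 0 with rfl | hv
  · simpa using hc
  rw [rayleighQuotient, reApplyInnerSelf_apply, RCLike.re_to_real, abs_div, abs_sq,
    div_le_iff₀ (by positivity)]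
  exact h v

theorem ContinuousLinearMap.opNorm_id_sub_smul_le [Nontrivial E] {A : E →L[ℝ] E}
    (hA : (A : E →ₗ[ℝ] E).IsSymmetric) {μ L h : ℝ}
    (hμ : ∀ v, μ * ‖v‖ ^ 2 ≤ ⟪v, A v⟫_ℝ) (hL : ‖A‖ ≤ L) (hh : 0 ≤ h) (hhL : h * L ≤ 1) :
    ‖ContinuousLinearMap.id ℝ E - h • A‖ ≤ 1 - h * μ := by
  have hμL := A.le_of_coercive_of_opNorm_le hμ hL
  refine opNorm_le_of_isSymmetric (LinearMap.IsSymmetric.id.sub (hA.smul (by simp)))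
    (by nlinarith) fun v => ?_
  have hquad : ⟪(ContinuousLinearMap.id ℝ E - h • A) v, v⟫_ℝ
      = ‖v‖ ^ 2 - h * ⟪v, A v⟫_ℝ := by
    simp [inner_sub_left, real_inner_smul_right, real_inner_comm]
  have hlow := mul_le_mul_of_nonneg_left (A.inner_self_apply_le_of_opNorm_le hL v) hh
  have hup := mul_le_mul_of_nonneg_left (hμ v) hh
  rw [hquad, abs_le]
  constructor <;> nlinarith [sq_nonneg ‖v‖]

end SymmetricOperator

theorem norm_sub_sub_smul_le_of_norm_deriv_sub_le {F : Type*} [NormedAddCommGroup F]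
    [NormedSpace ℝ F] {y v : ℝ → F} {a b M : ℝ} (hab : a ≤ b)
    (hy : ∀ t ∈ Icc a b, HasDerivAt y (v t) t) (hv : ∀ t ∈ Ico a b, ‖v t - v a‖ ≤ M * (t - a)) :
    ‖y b - y a - (b - a) • v a‖ ≤ M * (b - a) ^ 2 / 2 := by
  have hremainder : ∀ t ∈ Icc a b,
      HasDerivAt (fun t => y t - y a - (t - a) • v a) (v t - v a) t := fun t ht => by
    simpa using ((hy t ht).sub_const (y a)).fun_sub
      (((hasDerivAt_id' t).sub_const a).smul_const (v a))
  have hbound : ∀ t, HasDerivAt (fun t => M * (t - a) ^ 2 / 2) (M * (t - a)) t := fun t =>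
    ((((hasDerivAt_id' t).sub_const a).fun_pow 2).const_mul M).div_const 2 |>.congr_deriv
      (by push_cast; ring)
  exact image_norm_le_of_norm_deriv_right_le_deriv_boundary
    (fun t ht => (hremainder t ht).continuousAt.continuousWithinAt)
    (fun t ht => (hremainder t (Ico_subset_Icc_self ht)).hasDerivWithinAt)
    (by simp) hbound hv (right_mem_Icc.mpr hab)

section Gradient

variable {E : Type*} [NormedAddCommGroup E] [InnerProductSpace ℝ E] [CompleteSpace E]
  {f : E → ℝ}

theorem inner_fderiv_gradient_apply (a u v : E) :
    ⟪fderiv ℝ (gradient f) a u, v⟫_ℝ = fderiv ℝ (fderiv ℝ f) a u v := by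
  change ⟪fderiv ℝ ((toDual ℝ E).symm ∘ fderiv ℝ f) a u, v⟫_ℝ = _
  rw [LinearIsometryEquiv.comp_fderiv]
  exact toDual_symm_apply

theorem ContDiffAt.isSymmetric_fderiv_gradient {a : E} (hf : ContDiffAt ℝ 2 f a) :
    (fderiv ℝ (gradient f) a : E →ₗ[ℝ] E).IsSymmetric := fun u v => by
  rw [ContinuousLinearMap.coe_coe, real_inner_comm _ u, inner_fderiv_gradient_apply,
    inner_fderiv_gradient_apply, (hf.isSymmSndFDerivAt (by simp)).eq]

theorem ContDiff.differentiable_gradient (hf : ContDiff ℝ 2 f) :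
    Differentiable ℝ (gradient f) :=
  (toDual ℝ E).symm.differentiable.comp
    ((hf.fderiv_right (m := 1) (by norm_num)).differentiable one_ne_zero)

theorem ContDiff.norm_gradient_sub_le {L : ℝ} (hf : ContDiff ℝ 2 f)
    (hL : ∀ a, ‖fderiv ℝ (gradient f) a‖ ≤ L) (a b : E) :
    ‖gradient f a - gradient f b‖ ≤ L * ‖a - b‖ :=
  convex_univ.norm_image_sub_le_of_norm_fderiv_le (fun x _ => hf.differentiable_gradient x)
    (fun x _ => hL x) (mem_univ b) (mem_univ a)

theorem ContDiff.norm_sub_smul_gradient_sub_le [Nontrivial E] {μ L h : ℝ} (hf : ContDiff ℝ 2 f)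
    (hsc : ∀ a v, μ * ‖v‖ ^ 2 ≤ ⟪v, fderiv ℝ (gradient f) a v⟫_ℝ)
    (hL : ∀ a, ‖fderiv ℝ (gradient f) a‖ ≤ L) (hh : 0 ≤ h) (hhL : h * L ≤ 1) (a b : E) :
    ‖(a - h • gradient f a) - (b - h • gradient f b)‖ ≤ (1 - h * μ) * ‖a - b‖ :=
  convex_univ.norm_image_sub_le_of_norm_hasFDerivWithin_le
    (f := fun z => z - h • gradient f z)
    (fun z _ => ((hasFDerivAt_id z).sub
      ((hf.differentiable_gradient z).hasFDerivAt.const_smul h)).hasFDerivWithinAt)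
    (fun z _ => ContinuousLinearMap.opNorm_id_sub_smul_le
      (hf.contDiffAt.isSymmetric_fderiv_gradient) (hsc z) (hL z) hh hhL)
    (mem_univ b) (mem_univ a)

theorem ContDiff.norm_gradientFlow_sub_gradientStep_le {L ℓ s h : ℝ} (hf : ContDiff ℝ 2 f)
    (hL : ∀ a, ‖fderiv ℝ (gradient f) a‖ ≤ L) {y : ℝ → E}
    (hflow : ∀ t ∈ Icc s (s + h), HasDerivAt y (-gradient f (y t)) t)
    (hℓ : ∀ t ∈ Icc s (s + h), ‖gradient f (y t)‖ ≤ ℓ) (hh : 0 ≤ h) :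
    ‖y (s + h) - (y s - h • gradient f (y s))‖ ≤ L * ℓ * h ^ 2 / 2 := by
  have hL0 : 0 ≤ L := (norm_nonneg _).trans (hL (y s))
  have hspeed : ∀ t ∈ Icc s (s + h), ‖y t - y s‖ ≤ ℓ * (t - s) :=
    norm_image_sub_le_of_norm_deriv_le_segment' (fun t ht => (hflow t ht).hasDerivWithinAt)
      fun t ht => by simpa only [norm_neg] using hℓ t (Ico_subset_Icc_self ht)
  have hremainder := norm_sub_sub_smul_le_of_norm_deriv_sub_le (M := L * ℓ)
    (by linarith) hflow fun t ht =>
      calc ‖-gradient f (y t) - -gradient f (y s)‖ = ‖gradient f (y t) - gradient f (y s)‖ := by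
            rw [neg_sub_neg, norm_sub_rev]
        _ ≤ L * ‖y t - y s‖ := hf.norm_gradient_sub_le hL _ _
        _ ≤ L * (ℓ * (t - s)) := by gcongr; exact hspeed t (Ico_subset_Icc_self ht)
        _ = L * ℓ * (t - s) := by ring
  rw [← sub_add]
  simpa using hremainder

end Gradient

theorem le_of_le_mul_add_one_sub_mul {e : ℕ → ℝ} {q ε : ℝ} (hq : 0 ≤ q) (h0 : e 0 ≤ ε)
    (hstep : ∀ k, e (k + 1) ≤ q * e k + (1 - q) * ε) (k : ℕ) : e k ≤ ε := by
  induction k with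
  | zero => exact h0
  | succ k ih =>
    calc e (k + 1) ≤ q * e k + (1 - q) * ε := hstep k
      _ ≤ q * ε + (1 - q) * ε := by gcongr
      _ = ε := by ring

theorem gradient_descent_shadowing_radius_general {d : ℕ}
    (f : EuclideanSpace ℝ (Fin d) → ℝ) (L μ ℓ h : ℝ)
    (hf : ContDiff ℝ 2 f)
    (hsc : ∀ a v, μ * ‖v‖ ^ 2 ≤ inner ℝ v (fderiv ℝ (gradient f) a v))
    (hL : ∀ a, ‖fderiv ℝ (gradient f) a‖ ≤ L)
    (hμ : 0 < μ)
    (y : ℝ → EuclideanSpace ℝ (Fin d))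
    (hflow : ∀ t : ℝ, HasDerivAt y (-gradient f (y t)) t)
    (hℓ : ∀ t : ℝ, 0 ≤ t → ‖gradient f (y t)‖ ≤ ℓ)
    (hh : 0 < h) (hhL : h ≤ 1 / L)
    (x : ℕ → EuclideanSpace ℝ (Fin d))
    (hx0 : x 0 = y 0)
    (hgd : ∀ k : ℕ, x (k + 1) = x k - h • gradient f (x k)) :
    ∀ k : ℕ, ‖x k - y ((k : ℝ) * h)‖ ≤ h * ℓ * L / (2 * μ) := by
  have hε : 0 ≤ h * ℓ * L / (2 * μ) := by
    have hℓ0 : 0 ≤ ℓ := (norm_nonneg _).trans (hℓ 0 le_rfl)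
    have hL0 : 0 ≤ L := (norm_nonneg _).trans (hL 0)
    positivity
  -- in dimension 0 nothing forces `μ ≤ L`, so `1 - hμ` could be negative
  rcases subsingleton_or_nontrivial (EuclideanSpace ℝ (Fin d)) with hE | hE
  · intro k
    simpa [Subsingleton.elim (x k) (y (k * h))] using hε
  have hhL' : h * L ≤ 1 := (le_div_iff₀ (one_div_pos.mp (hh.trans_le hhL))).mp hhL
  have hμL : μ ≤ L := (fderiv ℝ (gradient f) 0).le_of_coercive_of_opNorm_le (hsc 0) (hL 0)
  refine le_of_le_mul_add_one_sub_mul (e := fun k => ‖x k - y ((k : ℝ) * h)‖)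
    (q := 1 - h * μ) (by nlinarith) (by simpa [hx0] using hε) fun k => ?_
  set s : ℝ := (k : ℝ) * h
  have hcast : ((k + 1 : ℕ) : ℝ) * h = s + h := by push_cast; ring
  calc ‖x (k + 1) - y (((k + 1 : ℕ) : ℝ) * h)‖
      = ‖((x k - h • gradient f (x k)) - (y s - h • gradient f (y s)))
          - (y (s + h) - (y s - h • gradient f (y s)))‖ := by
        rw [hgd, hcast, sub_sub_sub_cancel_right]
    _ ≤ (1 - h * μ) * ‖x k - y s‖ + L * ℓ * h ^ 2 / 2 :=
        norm_sub_le_of_le (hf.norm_sub_smul_gradient_sub_le hsc hL hh.le hhL' _ _)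
          (hf.norm_gradientFlow_sub_gradientStep_le hL (fun t _ => hflow t)
            (fun t ht => hℓ t ((by positivity : (0 : ℝ) ≤ s).trans ht.1)) hh.le)
    _ = (1 - h * μ) * ‖x k - y s‖ + (1 - (1 - h * μ)) * (h * ℓ * L / (2 * μ)) := by
        field_simp
        ring

/-- Dual formulation: for any 0 < h ≤ 1/L, gradient descent started at y₀ shadows
the sampled gradient flow with radius ε = hℓL/(2μ). -/
theorem gradient_descent_shadowing_radius {d : ℕ}
    (f : EuclideanSpace ℝ (Fin d) → ℝ) (L μ ℓ h : ℝ)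
    (hf : ContDiff ℝ 2 f)
    (hsc : ∀ a v, μ * ‖v‖ ^ 2 ≤ inner ℝ v (fderiv ℝ (gradient f) a v))
    (hL : ∀ a, ‖fderiv ℝ (gradient f) a‖ ≤ L)
    (hμ : 0 < μ) (hLpos : 0 < L) (hℓpos : 0 < ℓ)
    (y : ℝ → EuclideanSpace ℝ (Fin d))
    (hflow : ∀ t : ℝ, HasDerivAt y (-gradient f (y t)) t)
    (hℓ : ∀ t : ℝ, 0 ≤ t → ‖gradient f (y t)‖ ≤ ℓ)
    (hh : 0 < h) (hhL : h ≤ 1 / L)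
    (x : ℕ → EuclideanSpace ℝ (Fin d))
    (hx0 : x 0 = y 0)
    (hgd : ∀ k : ℕ, x (k + 1) = x k - h • gradient f (x k)) :
    ∀ k : ℕ, ‖x k - y ((k : ℝ) * h)‖ ≤ h * ℓ * L / (2 * μ) :=
  gradient_descent_shadowing_radius_general f L μ ℓ h hf hsc hL hμ y hflow hℓ hh hhL x hx0 hgd
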